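/- arXiv:1108.1987 — 2 statements merged into one kernel-verified Lean document; each statement's English description precedes it below -/
import Mathlib

section
/- For every n >= 1, the n-step preimage set of the block 001 under rule 130 consists exactly of the strings of length 2n+3 of the form: (2n-2i arbitrary bits) followed by 101 followed by 2i ones when i is odd, and (2n-2i arbitrary bits) followed by 001 followed by 2i ones when i is even, where i ranges over {0,...,n}. -/
set_option linter.unreachableTactic false
set_option linter.unusedTactic false
set_option linter.unnecessarySeqFocus false

/-- Local rule of elementary CA 130: f(x,y,z)=1 iff (x,y,z)=(0,0,1) or (1,1,1). -/
def f130 (x y z : Bool) : Bool := (!x && !y && z) || (x && y && z)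

/-- Block evolution operator: maps a_0...a_{m-1} to the length m-2 string with
entries f(a_i,a_{i+1},a_{i+2}). -/
def bstep (a : List Bool) : List Bool :=
  (List.range (a.length - 2)).map
    (fun i => f130 (a.getD i false) (a.getD (i+1) false) (a.getD (i+2) false))

/-- n-step preimage set of a length-3 block b: binary strings of length 2n+3
mapped to b by n applications of the block evolution operator. -/
def preim (n : ℕ) (b : List Bool) : Set (List Bool) :=
  {a | a.length = 2*n+3 ∧ bstep^[n] a = b}

lemma bstep_length (a : List Bool) : (bstep a).length = a.length - 2 := by simp [bstep]
lemma bstep_getD (a : List Bool) (p : ℕ) (h : p < a.length - 2) :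
    (bstep a).getD p false = f130 (a.getD p false) (a.getD (p+1) false) (a.getD (p+2) false) := by
  simp [bstep, List.getD_eq_getElem?_getD, List.getElem?_map, List.getElem?_range h]
lemma getD_app_left (u v : List Bool) (q : ℕ) (h : q < u.length) : (u ++ v).getD q false = u.getD q false := by
  simp [List.getD_eq_getElem?_getD, List.getElem?_append, h]
lemma getD_app_right (u v : List Bool) (q : ℕ) (h : u.length ≤ q) : (u ++ v).getD q false = v.getD (q - u.length) false := by
  simp [List.getD_eq_getElem?_getD, List.getElem?_append, Nat.not_lt.mpr h]
lemma getD_take2 (v : List Bool) (q : ℕ) (h : q < 2) : (v.take 2).getD q false = v.getD q false := by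
  simp [List.getD_eq_getElem?_getD, List.getElem?_take, h]
lemma getD_repl (k q : ℕ) (h : q < k) : (List.replicate k true).getD q false = true := by
  simp [List.getD_eq_getElem?_getD, List.getElem?_replicate, if_pos h]
lemma ext_getD {l₁ l₂ : List Bool} (hl : l₁.length = l₂.length)
    (h : ∀ p < l₁.length, l₁.getD p false = l₂.getD p false) : l₁ = l₂ := by
  apply List.ext_getElem hl
  intro p h1 h2
  have := h p h1
  rwa [List.getD_eq_getElem _ _ h1, List.getD_eq_getElem _ _ h2] at this

lemma bstep_append (u v : List Bool) (hv : 2 ≤ v.length) :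
    bstep (u ++ v) = bstep (u ++ v.take 2) ++ bstep v := by
  have huv : (u ++ v).length = u.length + v.length := by simp
  have h2 : (u ++ v.take 2).length = u.length + 2 := by simp; omega
  apply ext_getD
  · simp [bstep_length, huv, h2]; omega
  intro p hp
  rw [bstep_length, huv] at hp
  -- key getD fact: for q < u.length + 2, (u++v).getD q = (u ++ v.take 2).getD q
  have key : ∀ q, q < u.length + 2 → (u ++ v).getD q false = (u ++ v.take 2).getD q false := by
    intro q hq
    rcases lt_or_ge q u.length with h | h
    · rw [getD_app_left _ _ _ h, getD_app_left _ _ _ h]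
    · rw [getD_app_right _ _ _ h, getD_app_right _ _ _ h, getD_take2]
      omega
  rcases lt_or_ge p u.length with h | h
  · rw [bstep_getD _ _ (by omega), getD_app_left (bstep (u ++ v.take 2)) _ _ (by rw [bstep_length, h2]; omega),
      bstep_getD _ _ (by rw [h2]; omega), key p (by omega), key (p+1) (by omega), key (p+2) (by omega)]
  · have hlen : (bstep (u ++ v.take 2)).length = u.length := by rw [bstep_length, h2]; omega
    rw [getD_app_right (bstep (u ++ v.take 2)) (bstep v) p (by rw [hlen]; exact h), hlen,
      bstep_getD (u ++ v) p (by omega), bstep_getD v (p - u.length) (by omega),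
      getD_app_right u v p h, getD_app_right u v (p+1) (by omega), getD_app_right u v (p+2) (by omega)]
    congr 2 <;> omega

lemma bstep_replicate (m : ℕ) : bstep (List.replicate m true) = List.replicate (m-2) true := by
  apply ext_getD
  · simp [bstep_length]
  intro p hp
  rw [bstep_length, List.length_replicate] at hp
  rw [bstep_getD _ _ (by simp; omega), getD_repl m p (by omega), getD_repl m (p+1) (by omega),
    getD_repl m (p+2) (by omega), getD_repl (m-2) p (by omega)]
  rfl

lemma f130_true : ∀ x y z : Bool, (f130 x y z = true ↔ z = true ∧ x = y) := by decide
lemma f130_false : ∀ x y z : Bool, (f130 x y z = false ↔ ¬(z = true ∧ x = y)) := by decide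

lemma key_suffix (i : ℕ) (t : List Bool) (ht : t.length = 2*i+5)
    (h : bstep t = (if i % 2 = 1 then [true,false,true] else [false,false,true])
          ++ List.replicate (2*i) true) :
    t = (if (i+1) % 2 = 1 then [true,false,true] else [false,false,true])
          ++ List.replicate (2*i+2) true ∨ (i = 0 ∧ ∃ x y, t = [x, y, false, false, true]) := by
  match i with
  | 0 =>
    rcases t with _|⟨t0,_|⟨t1,_|⟨t2,_|⟨t3,_|⟨t4,_|⟨t5,t⟩⟩⟩⟩⟩⟩ <;> simp at ht
    simp only [Nat.zero_mod] at h ⊢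
    revert h
    rcases t0 <;> rcases t1 <;> rcases t2 <;> rcases t3 <;> rcases t4 <;> decide
  | j+1 =>
    set i := j + 1 with hi
    have hi1 : 1 ≤ i := by omega
    set b : List Bool := if i % 2 = 1 then [true,false,true] else [false,false,true] with hbdef
    have hb3 : b.length = 3 := by rw [hbdef]; split <;> rfl
    have hb : ∀ p < 2*i+3, f130 (t.getD p false) (t.getD (p+1) false) (t.getD (p+2) false)
        = (b ++ List.replicate (2*i) true).getD p false := by
      intro p hp
      rw [← bstep_getD t p (by omega), h]
    have ones : ∀ p, 3 ≤ p → p < 2*i+3 →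
        t.getD (p+2) false = true ∧ t.getD p false = t.getD (p+1) false := by
      intro p h3 hp
      have := hb p hp
      rw [getD_app_right _ _ _ (by omega), getD_repl _ _ (by omega)] at this
      exact (f130_true _ _ _).mp this
    have t5up : ∀ q, 5 ≤ q → q < 2*i+5 → t.getD q false = true := by
      intro q h5 hq
      have := (ones (q-2) (by omega) (by omega)).1
      have hq2 : q - 2 + 2 = q := by omega
      rwa [hq2] at this
    have ht5 : t.getD 5 false = true := (ones 3 (by omega) (by omega)).1
    have ht4 : t.getD 4 false = true := by
      have := (ones 4 (by omega) (by omega)).2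
      have h6 := (ones 4 (by omega) (by omega))
      rw [this]; exact ht5
    have ht3 : t.getD 3 false = true := by
      rw [(ones 3 (by omega) (by omega)).2]; exact ht4
    have hb2 := hb 2 (by omega)
    rw [getD_app_left _ _ _ (by omega)] at hb2
    have hbv2 : b.getD 2 false = true := by rw [hbdef]; split <;> rfl
    rw [hbv2] at hb2
    have ht2 : t.getD 2 false = true := by
      rw [((f130_true _ _ _).mp hb2).2]; exact ht3
    have hb1 := hb 1 (by omega)
    rw [getD_app_left _ _ _ (by omega)] at hb1
    have hbv1 : b.getD 1 false = false := by rw [hbdef]; split <;> rfl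
    rw [hbv1] at hb1
    have ht1 : t.getD 1 false = false := by
      have := (f130_false _ _ _).mp hb1
      rcases hx : t.getD 1 false with _|_
      · rfl
      · exfalso; exact this ⟨ht3, by rw [hx, ht2]⟩
    have hb0 := hb 0 (by omega)
    rw [getD_app_left _ _ _ (by omega)] at hb0
    left
    rcases Nat.even_or_odd i with he | ho
    · -- i even: b = 001, b.getD 0 = false, t0 = true; i+1 odd: target 101
      have hie : i % 2 = 0 := Nat.even_iff.mp he
      have hbv0 : b.getD 0 false = false := by rw [hbdef, if_neg (by omega)]; rfl
      rw [hbv0] at hb0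
      have ht0 : t.getD 0 false = true := by
        have := (f130_false _ _ _).mp hb0
        rcases hx : t.getD 0 false with _|_
        · exfalso; exact this ⟨ht2, by rw [hx, ht1]⟩
        · rfl
      rw [if_pos (by omega : (i+1) % 2 = 1)]
      apply ext_getD
      · simp [ht] <;> omega
      intro p hp
      rw [ht] at hp
      rcases p with _|(_|(_|(_|(_|q))))
      · rw [ht0, getD_app_left _ _ _ (by simp)]; rfl
      · rw [ht1, getD_app_left _ _ _ (by simp)]; rfl
      · rw [ht2, getD_app_left _ _ _ (by simp)]; rfl
      · rw [ht3, getD_app_right _ _ _ (by simp), getD_repl _ _ (by simp <;> omega)]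
      · rw [ht4, getD_app_right _ _ _ (by simp), getD_repl _ _ (by simp <;> omega)]
      · rw [t5up _ (by omega) (by omega), getD_app_right _ _ _ (by simp <;> omega),
          getD_repl _ _ (by simp <;> omega)]
    · -- i odd: b = 101, b.getD 0 = true, t0 = false; i+1 even: target 001
      have hio : i % 2 = 1 := Nat.odd_iff.mp ho
      have hbv0 : b.getD 0 false = true := by rw [hbdef, if_pos hio]; rfl
      rw [hbv0] at hb0
      have ht0 : t.getD 0 false = false := by
        have := ((f130_true _ _ _).mp hb0).2
        rw [this, ht1]
      rw [if_neg (by omega : ¬ (i+1) % 2 = 1)]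
      apply ext_getD
      · simp [ht] <;> omega
      intro p hp
      rw [ht] at hp
      rcases p with _|(_|(_|(_|(_|q))))
      · rw [ht0, getD_app_left _ _ _ (by simp)]; rfl
      · rw [ht1, getD_app_left _ _ _ (by simp)]; rfl
      · rw [ht2, getD_app_left _ _ _ (by simp)]; rfl
      · rw [ht3, getD_app_right _ _ _ (by simp), getD_repl _ _ (by simp <;> omega)]
      · rw [ht4, getD_app_right _ _ _ (by simp), getD_repl _ _ (by simp <;> omega)]
      · rw [t5up _ (by omega) (by omega), getD_app_right _ _ _ (by simp <;> omega),
          getD_repl _ _ (by simp <;> omega)]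

lemma bstep5a : ∀ x y : Bool, bstep [x,y,false,false,true] = [false,false,true] := by decide
lemma bstep_tft : bstep [true,false,true,true,true] = [false,false,true] := by decide
lemma bstep_fft : bstep [false,false,true,true,true] = [true,false,true] := by decide

lemma main (n : ℕ) : preim n [false, false, true] =
      {a | ∃ i ≤ n, ∃ w : List Bool, w.length = 2*n - 2*i ∧
        a = w ++ (if i % 2 = 1 then [true, false, true] else [false, false, true])
              ++ List.replicate (2*i) true} := by
  induction n with
  | zero =>
    ext a
    simp only [preim, Set.mem_setOf_eq, Function.iterate_zero, id_eq]
    constructor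
    · rintro ⟨h1, rfl⟩
      exact ⟨0, le_refl 0, [], by simp, by simp⟩
    · rintro ⟨i, hi, w, hw, rfl⟩
      have hi0 : i = 0 := by omega
      subst hi0
      have hw0 : w = [] := List.eq_nil_of_length_eq_zero (by simpa using hw)
      subst hw0
      simp
  | succ n ih =>
    ext a
    simp only [preim, Set.mem_setOf_eq]
    constructor
    · rintro ⟨hlen, hstep⟩
      rw [Function.iterate_succ_apply] at hstep
      have hmem : bstep a ∈ preim n [false, false, true] :=
        ⟨by rw [bstep_length, hlen]; omega, hstep⟩
      rw [ih] at hmem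
      obtain ⟨i, hi, w, hw, heq⟩ := hmem
      set w' := a.take (2*n-2*i) with hw'def
      set t := a.drop (2*n-2*i) with htdef
      have hsplit : w' ++ t = a := List.take_append_drop _ _
      have hw'len : w'.length = 2*n-2*i := by
        rw [hw'def, List.length_take, hlen]; omega
      have htlen : t.length = 2*i+5 := by
        rw [htdef, List.length_drop, hlen]; omega
      have hdec : bstep a = bstep (w' ++ t.take 2) ++ bstep t := by
        conv_lhs => rw [← hsplit]
        exact bstep_append w' t (by omega)
      have hfl : (bstep (w' ++ t.take 2)).length = w.length := by
        rw [bstep_length, List.length_append, hw'len, List.length_take, htlen, hw]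
        omega
      have hbt : bstep t =
          (if i % 2 = 1 then [true, false, true] else [false, false, true])
            ++ List.replicate (2*i) true := by
        have h2 : bstep (w' ++ t.take 2) ++ bstep t =
            w ++ ((if i % 2 = 1 then [true, false, true] else [false, false, true])
              ++ List.replicate (2*i) true) := by
          rw [← hdec, heq, List.append_assoc]
        exact (List.append_inj h2 hfl).2
      rcases key_suffix i t htlen hbt with hL | ⟨hi0, x, y, hR⟩
      · refine ⟨i+1, by omega, w', by rw [hw'len]; omega, ?_⟩
        have h22 : 2*(i+1) = 2*i+2 := by omega
        rw [← hsplit, hL, List.append_assoc, h22]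
      · subst hi0
        refine ⟨0, by omega, w' ++ [x, y], ?_, ?_⟩
        · simp [hw'len]; omega
        · rw [← hsplit, hR]
          simp
    · rintro ⟨j, hj, w, hw, rfl⟩
      have hblk : (if j % 2 = 1 then [true, false, true] else [false, false, true] :
          List Bool).length = 3 := by split <;> rfl
      have hlen : (w ++ (if j % 2 = 1 then [true, false, true] else [false, false, true])
          ++ List.replicate (2*j) true).length = 2*(n+1)+3 := by
        simp only [List.length_append, hblk, List.length_replicate, hw]; omega
      refine ⟨hlen, ?_⟩
      rw [Function.iterate_succ_apply]
      have hmem : bstep (w ++ (if j % 2 = 1 then [true, false, true] else [false, false, true])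
          ++ List.replicate (2*j) true) ∈
          {a : List Bool | ∃ i ≤ n, ∃ v : List Bool, v.length = 2*n - 2*i ∧
            a = v ++ (if i % 2 = 1 then [true, false, true] else [false, false, true])
              ++ List.replicate (2*i) true} := by
        match j with
        | 0 =>
          simp only [Nat.zero_mod, if_neg (by omega : ¬ (0:ℕ) % 2 = 1), Nat.mul_zero,
            List.replicate_zero, List.append_nil] at *
          have hwlen : w.length = 2*n+2 := by omega
          set u := w.take (2*n) with hu
          set d := w.drop (2*n) with hd
          have hdl : d.length = 2 := by rw [hd, List.length_drop, hwlen]; omega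
          obtain ⟨x, y, hdxy⟩ : ∃ x y, d = [x, y] := by
            rcases d with _|⟨x,_|⟨y,_|_⟩⟩ <;> simp at hdl
            exact ⟨x, y, rfl⟩
          have hwsplit : w = u ++ [x, y] := by rw [hu, ← hdxy, hd, List.take_append_drop]
          have : w ++ [false, false, true] = u ++ ([x,y] ++ [false, false, true]) := by
            rw [hwsplit, List.append_assoc]
          rw [this, bstep_append u ([x,y] ++ [false,false,true]) (by simp)]
          refine ⟨0, by omega, bstep (u ++ ([x,y] ++ [false,false,true]).take 2), ?_, ?_⟩
          · rw [bstep_length]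
            simp [hu, hwlen]
          · show _ = _ ++ [false, false, true] ++ List.replicate 0 true
            have : ([x,y] ++ [false,false,true] : List Bool) = [x,y,false,false,true] := rfl
            rw [this, bstep5a]
            simp
        | k+1 =>
          have hrep : List.replicate (2*(k+1)) true =
              List.replicate 2 true ++ List.replicate (2*k) true := by
            rw [← List.replicate_add]; congr 1; omega
          set b : List Bool := if (k+1) % 2 = 1 then [true,false,true] else [false,false,true]
            with hbdef
          have hb3 : b.length = 3 := by rw [hbdef]; split <;> rfl
          have hstep1 : bstep (w ++ b ++ List.replicate (2*(k+1)) true) =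
              bstep (w ++ b ++ [true, true]) ++ List.replicate (2*k) true := by
            have e1 : (List.replicate (2*(k+1)) true).take 2 = [true, true] := by
              rw [List.take_replicate, show min 2 (2*(k+1)) = 2 by omega]; rfl
            have e2 : 2*(k+1) - 2 = 2*k := by omega
            rw [bstep_append (w ++ b) _ (by simp <;> omega), bstep_replicate, e1, e2]
          have hstep2 : bstep (w ++ b ++ [true, true]) =
              bstep (w ++ (b ++ [true,true]).take 2) ++ bstep (b ++ [true, true]) := by
            rw [List.append_assoc]
            exact bstep_append w (b ++ [true,true]) (by simp)
          have hbb : bstep (b ++ [true, true]) =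
              (if k % 2 = 1 then [true,false,true] else [false,false,true]) := by
            rw [hbdef]
            rcases Nat.even_or_odd k with he | ho
            · have h1 : k % 2 = 0 := Nat.even_iff.mp he
              rw [if_pos (by omega), if_neg (by omega)]
              exact bstep_tft
            · have h1 : k % 2 = 1 := Nat.odd_iff.mp ho
              rw [if_neg (by omega), if_pos h1]
              exact bstep_fft
          refine ⟨k, by omega, bstep (w ++ (b ++ [true,true]).take 2), ?_, ?_⟩
          · rw [bstep_length]
            simp only [List.length_append, List.length_take, hb3, hw]
            simp <;> omega
          · rw [hstep1, hstep2, hbb, List.append_assoc]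
      rw [← ih] at hmem
      exact hmem.2

theorem stmt2 (n : ℕ) (hn : 1 ≤ n) :
    preim n [false, false, true] =
      {a | ∃ i ≤ n, ∃ w : List Bool, w.length = 2*n - 2*i ∧
        a = w ++ (if i % 2 = 1 then [true, false, true] else [false, false, true])
              ++ List.replicate (2*i) true} := main n
end

section
/- Let P_n(001) = sum over the n-step preimage set of 001 under rule 130 of rho^{(number of ones)} (1-rho)^{(number of zeros)}, for 0 <= rho <= 1. Then P_n(001) = rho(-rho^{4*ceil((n-1)/2)+4} + rho^{4*ceil((n-1)/2)+5} - rho^{4*floor((n+1)/2)+3} + rho^3 - rho + 1) / (rho^3 + rho^2 + rho + 1). -/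
/-- Probability of a block in a Bernoulli(ρ) product measure. -/
noncomputable def wt (ρ : ℝ) (a : List Bool) : ℝ :=
  ρ ^ (a.count true) * (1 - ρ) ^ (a.count false)

lemma bstep_cons (x y z : Bool) (t : List Bool) :
    bstep (x::y::z::t) = f130 x y z :: bstep (y::z::t) := by
  simp only [bstep, List.length_cons]
  have : x :: y :: z :: t = x :: (y :: z :: t) := rfl
  rw [show (t.length + 1 + 1 + 1 - 2) = (t.length + 1) from rfl,
      show (t.length + 1 + 1 - 2) = t.length from rfl,
      List.range_succ_eq_map, List.map_cons, List.map_map]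
  rfl

lemma bstep_three (x y z : Bool) : bstep [x, y, z] = [f130 x y z] := by
  simp [bstep, List.range_succ]

lemma f130_false_right (x y : Bool) : f130 x y false = false := by
  cases x <;> cases y <;> rfl

lemma prepend_preim : ∀ n (s : List Bool), s.length = 2*n+3 →
    bstep^[n] s = [false, false, true] →
    ∀ x y, bstep^[n+1] (x::y::s) = [false, false, true] := by
  intro n
  induction n with
  | zero =>
    intro s hl hs x y
    simp only [Function.iterate_zero, id] at hs
    subst hs
    rw [Function.iterate_one, bstep_cons, bstep_cons, bstep_three]
    simp [f130_false_right, f130]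
  | succ n ih =>
    intro s hl hs x y
    match s, hl with
    | z0::z1::rest, hl =>
      have hd : bstep (x::y::z0::z1::rest) = f130 x y z0 :: f130 y z0 z1 :: bstep (z0::z1::rest) := by
        rw [bstep_cons, bstep_cons]
      rw [Function.iterate_succ_apply, hd]
      have hlen : (bstep (z0::z1::rest)).length = 2*n+3 := by
        rw [bstep_length]; simp at hl ⊢; omega
      have hstep : bstep^[n] (bstep (z0::z1::rest)) = [false, false, true] := by
        rw [← Function.iterate_succ_apply]; exact hs
      exact ih _ hlen hstep _ _

def cb : ℕ → Bool
  | 0 => false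
  | n+1 => !cb n

def eb (k : ℕ) : List Bool := cb k :: false :: List.replicate (2*k+1) true

lemma eb_length (k : ℕ) : (eb k).length = 2*k+3 := by simp [eb]

lemma bstep_rep : ∀ m, bstep (List.replicate (m+2) true) = List.replicate m true := by
  intro m
  induction m with
  | zero => simp [bstep]
  | succ m ih =>
    have h1 : List.replicate (m+1+2) true = true :: true :: true :: List.replicate m true := by
      simp [List.replicate_succ]
    have h2 : List.replicate (m+2) true = true :: true :: List.replicate m true := by
      simp [List.replicate_succ]
    rw [h1, bstep_cons, ← h2, ih, show f130 true true true = true from rfl,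
        ← List.replicate_succ]

lemma bstep_eb (n : ℕ) : bstep (eb (n+2)) = eb (n+1) := by
  have h1 : eb (n+2) = cb (n+2) :: false :: true :: true ::
      List.replicate (2*n+3) true := by
    show cb (n+2) :: false :: List.replicate (2*(n+2)+1) true = _
    rw [show 2*(n+2)+1 = ((2*n+3)+1)+1 by ring, List.replicate_succ, List.replicate_succ]
  have h2 : true :: true :: List.replicate (2*n+3) true
      = List.replicate ((2*n+3)+2) true := by
    simp [List.replicate_succ]
  rw [h1, bstep_cons, bstep_cons, h2, bstep_rep]
  have hc : f130 (cb (n+2)) false true = cb (n+1) := by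
    show f130 (!cb (n+1)) false true = cb (n+1)
    cases cb (n+1) <;> rfl
  rw [hc, show f130 false true true = false from rfl]
  simp only [eb, show 2*(n+1)+1 = 2*n+3 by ring]

lemma eb_preim : ∀ n, bstep^[n+1] (eb (n+1)) = [false, false, true] := by
  intro n
  induction n with
  | zero => decide
  | succ n ih =>
    rw [Function.iterate_succ_apply, bstep_eb]
    exact ih

lemma rep_back : ∀ m (s : List Bool), s.length = m + 4 →
    bstep s = List.replicate (m+2) true → s = List.replicate (m+4) true := by
  intro m
  induction m with
  | zero =>
    intro s hl hb
    match s, hl with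
    | [a,b,c,d], _ =>
      rw [bstep_cons, bstep_three] at hb
      have h1 : f130 a b c = true ∧ f130 b c d = true := by
        constructor <;> [exact (List.cons_eq_cons.mp hb).1;
          exact (List.cons_eq_cons.mp (List.cons_eq_cons.mp hb).2).1]
      revert h1
      revert a b c d
      decide
  | succ m ih =>
    intro s hl hb
    match s, hl with
    | a::b::c::rest, hl =>
      rw [bstep_cons] at hb
      rw [show m+1+2 = (m+2)+1 from rfl, List.replicate_succ] at hb
      have h1 := (List.cons_eq_cons.mp hb).1
      have h2 := (List.cons_eq_cons.mp hb).2
      have hlen : (b::c::rest).length = m + 4 := by simp at hl ⊢; omega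
      have h3 := ih _ hlen h2
      rw [show m+4 = (m+3)+1 from rfl, List.replicate_succ] at h3
      have hb' : b = true := (List.cons_eq_cons.mp h3).1
      have hrest := (List.cons_eq_cons.mp h3).2
      rw [show m+3 = (m+2)+1 from rfl, List.replicate_succ] at hrest
      have hc' : c = true := (List.cons_eq_cons.mp hrest).1
      have hr2 := (List.cons_eq_cons.mp hrest).2
      have ha : a = true := by
        rw [hb', hc'] at h1
        cases a
        · exact absurd h1 (by decide)
        · rfl
      rw [ha, hb', hc', hr2]
      simp [List.replicate_succ]

lemma f130_true_cases {x y z : Bool} (h : f130 x y z = true) :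
    (x = false ∧ y = false ∧ z = true) ∨ (x = true ∧ y = true ∧ z = true) := by
  revert h; cases x <;> cases y <;> cases z <;> decide

lemma f130_tt (x : Bool) : f130 x true true = x := by cases x <;> rfl
lemma f130_ft (x : Bool) : f130 x false true = !x := by cases x <;> rfl

lemma preim_succ : ∀ n (a : List Bool),
    a ∈ preim (n+1) [false, false, true] ↔
      ((∃ x y s, s ∈ preim n [false, false, true] ∧ a = x::y::s) ∨ a = eb (n+1)) := by
  intro n
  induction n with
  | zero =>
    intro a
    constructor
    · rintro ⟨hl, hb⟩
      match a, hl with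
      | w0::w1::z0::z1::z2::[], hl =>
        rw [Function.iterate_one, bstep_cons, bstep_cons, bstep_three] at hb
        have h1 : f130 w0 w1 z0 = false := (List.cons_eq_cons.mp hb).1
        have h2 : f130 w1 z0 z1 = false :=
          (List.cons_eq_cons.mp (List.cons_eq_cons.mp hb).2).1
        have h3 : f130 z0 z1 z2 = true := by
          have := (List.cons_eq_cons.mp (List.cons_eq_cons.mp hb).2).2
          exact (List.cons_eq_cons.mp this).1
        rcases f130_true_cases h3 with ⟨e0, e1, e2⟩ | ⟨e0, e1, e2⟩
        · left
          exact ⟨w0, w1, [z0, z1, z2], ⟨by simp, by rw [e0, e1, e2]; rfl⟩, rfl⟩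
        · right
          subst e0; subst e1; subst e2
          rw [f130_tt] at h2
          subst h2
          rw [f130_ft] at h1
          have : w0 = true := by revert h1; cases w0 <;> decide
          subst this
          rfl
    · rintro (⟨x, y, s, ⟨hl, hb⟩, rfl⟩ | rfl)
      · exact ⟨by simp at hl ⊢; omega, prepend_preim 0 s hl hb x y⟩
      · exact ⟨eb_length 1, eb_preim 0⟩
  | succ n ih =>
    intro a
    constructor
    · rintro ⟨hl, hb⟩
      match a, hl with
      | w0::w1::z0::z1::rest, hl =>
        have hd : bstep (w0::w1::z0::z1::rest)
            = f130 w0 w1 z0 :: f130 w1 z0 z1 :: bstep (z0::z1::rest) := by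
          rw [bstep_cons, bstep_cons]
        have hsl : (z0::z1::rest).length = 2*(n+1)+3 := by simp at hl ⊢; omega
        have hmem : bstep (w0::w1::z0::z1::rest) ∈ preim (n+1) [false, false, true] := by
          refine ⟨?_, ?_⟩
          · rw [bstep_length]; simp at hl ⊢; omega
          · rw [← Function.iterate_succ_apply]; exact hb
        rcases (ih _).mp hmem with ⟨x', y', s', hs', heq⟩ | heq
        · rw [hd] at heq
          have hse : s' = bstep (z0::z1::rest) :=
            ((List.cons_eq_cons.mp (List.cons_eq_cons.mp heq).2).2).symm
          rw [hse] at hs'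
          obtain ⟨hsl', hsb'⟩ := hs'
          left
          refine ⟨w0, w1, z0::z1::rest, ⟨hsl, ?_⟩, rfl⟩
          rw [Function.iterate_succ_apply]; exact hsb'
        · rw [hd] at heq
          simp only [eb] at heq
          have h1 : f130 w0 w1 z0 = cb (n+1) := (List.cons_eq_cons.mp heq).1
          have h2 : f130 w1 z0 z1 = false :=
            (List.cons_eq_cons.mp (List.cons_eq_cons.mp heq).2).1
          have h3 : bstep (z0::z1::rest) = List.replicate (2*(n+1)+1) true :=
            (List.cons_eq_cons.mp (List.cons_eq_cons.mp heq).2).2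
          have hrep : z0::z1::rest = List.replicate ((2*n+1)+4) true := by
            apply rep_back (2*n+1)
            · simp at hsl ⊢; omega
            · rw [h3]; congr 1
          have hz0 : z0 = true := by
            have := congrArg (fun l => l.getD 0 false) hrep; simpa using this
          have hz1 : z1 = true := by
            have := congrArg (fun l => l.getD 1 false) hrep
            simpa [List.replicate_succ] using this
          have hrest : rest = List.replicate (2*n+3) true := by
            have := congrArg (List.drop 2) hrep
            simpa [List.replicate_succ, show (2*n+1)+2 = 2*n+3 by ring] using this
          subst hz0; subst hz1
          rw [f130_tt] at h2
          subst h2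
          rw [f130_ft] at h1
          have hw0 : w0 = !cb (n+1) := by
            cases w0 <;> cases hcb : cb (n+1) <;> rw [hcb] at h1 <;> simp_all
          right
          rw [hw0, hrest]
          show (!cb (n+1)) :: false :: true :: true :: List.replicate (2*n+3) true
              = cb (n+2) :: false :: List.replicate (2*(n+2)+1) true
          rw [show cb (n+2) = !cb (n+1) from rfl,
              show 2*(n+2)+1 = ((2*n+3)+1)+1 by ring]
          simp [List.replicate_succ]
    · rintro (⟨x, y, s, ⟨hl, hb⟩, rfl⟩ | rfl)
      · exact ⟨by simp at hl ⊢; omega, prepend_preim (n+1) s hl hb x y⟩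
      · exact ⟨eb_length (n+2), eb_preim (n+1)⟩

def T : ℕ → Finset (List Bool)
  | 0 => {[false, false, true]}
  | n+1 => ((Finset.univ : Finset (Bool × Bool)) ×ˢ T n).image
      (fun p => p.1.1 :: p.1.2 :: p.2) ∪ {eb (n+1)}

lemma preim_zero : preim 0 [false, false, true] = {[false, false, true]} := by
  ext a
  constructor
  · rintro ⟨h1, h2⟩; simpa using h2
  · rintro rfl; exact ⟨rfl, rfl⟩

lemma char : ∀ n, preim n [false, false, true] = ↑(T n) := by
  intro n
  induction n with
  | zero => rw [preim_zero]; simp [T]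
  | succ n ih =>
    ext a
    rw [Finset.mem_coe, preim_succ]
    simp only [T, Finset.mem_union, Finset.mem_image, Finset.mem_singleton,
      Finset.mem_product]
    constructor
    · rintro (⟨x, y, s, hs, rfl⟩ | rfl)
      · left
        refine ⟨((x, y), s), ?_, rfl⟩
        constructor
        · simp
        · rw [ih] at hs; exact hs
      · right; rfl
    · rintro (⟨⟨⟨x, y⟩, s⟩, ⟨_, hs⟩, rfl⟩ | rfl)
      · left
        exact ⟨x, y, s, by rw [ih]; exact hs, rfl⟩
      · right; rfl

lemma iter_rep : ∀ n m, bstep^[n] (List.replicate (2*n+m) true) = List.replicate m true := by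
  intro n
  induction n with
  | zero => intro m; simp
  | succ n ih =>
    intro m
    rw [Function.iterate_succ_apply, show 2*(n+1)+m = (2*n+m)+2 by ring, bstep_rep]
    exact ih m

lemma rep_not_mem_T (n : ℕ) : List.replicate (2*n+3) true ∉ T n := by
  intro h
  have : List.replicate (2*n+3) true ∈ preim n [false, false, true] := by
    rw [char]; exact_mod_cast h
  obtain ⟨_, hb⟩ := this
  rw [iter_rep n 3] at hb
  exact absurd hb (by decide)

lemma wt_cons (ρ : ℝ) (b : Bool) (l : List Bool) :
    wt ρ (b :: l) = (cond b ρ (1-ρ)) * wt ρ l := by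
  cases b <;> simp [wt, List.count_cons, pow_succ] <;> ring

lemma sum_T_succ (n : ℕ) (ρ : ℝ) :
    ∑ a ∈ T (n+1), wt ρ a = (∑ a ∈ T n, wt ρ a) + wt ρ (eb (n+1)) := by
  rw [show T (n+1) = ((Finset.univ : Finset (Bool × Bool)) ×ˢ T n).image
      (fun p => p.1.1 :: p.1.2 :: p.2) ∪ {eb (n+1)} from rfl]
  rw [Finset.sum_union]
  · congr 1
    · rw [Finset.sum_image]
      · rw [Finset.sum_product]
        have : ∀ x : Bool × Bool, ∀ s, wt ρ (x.1 :: x.2 :: s)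
            = (cond x.1 ρ (1-ρ)) * (cond x.2 ρ (1-ρ)) * wt ρ s := by
          intro x s; rw [wt_cons, wt_cons]; ring
        simp only [this]
        rw [Fintype.sum_prod_type]
        simp only [← Finset.sum_mul, ← Finset.mul_sum]
        rw [Fintype.sum_bool]
        simp only [Bool.cond_true, Bool.cond_false]
        ring
      · intro p _ q _ h
        have h1 := (List.cons_eq_cons.mp h).1
        have h2 := (List.cons_eq_cons.mp (List.cons_eq_cons.mp h).2).1
        have h3 := (List.cons_eq_cons.mp (List.cons_eq_cons.mp h).2).2
        exact Prod.ext (Prod.ext h1 h2) h3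
    · simp
  · simp only [Finset.disjoint_singleton_right, Finset.mem_image, not_exists]
    rintro ⟨⟨x, y⟩, s⟩ hmemh
    obtain ⟨hmem, h⟩ := hmemh
    simp only [eb] at h
    have : s = List.replicate (2*n+3) true := by
      have h2 := (List.cons_eq_cons.mp (List.cons_eq_cons.mp h).2).2
      rw [h2]; congr 1
    have hs : s ∈ T n := (Finset.mem_product.mp hmem).2
    exact rep_not_mem_T n (this ▸ hs)

lemma cb_two (k : ℕ) : cb (k+2) = cb k := Bool.not_not (cb k)

lemma cb_even : ∀ j, cb (2*j) = false := by
  intro j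
  induction j with
  | zero => rfl
  | succ j ih => rw [show 2*(j+1) = 2*j+2 by ring, cb_two]; exact ih

lemma cb_odd (j : ℕ) : cb (2*j+1) = true := by
  have : cb (2*j+1) = !cb (2*j) := rfl
  rw [this, cb_even]; rfl

lemma wt_rep (ρ : ℝ) (m : ℕ) : wt ρ (List.replicate m true) = ρ ^ m := by
  simp [wt, List.count_replicate]

lemma wt_eb_odd (ρ : ℝ) (j : ℕ) : wt ρ (eb (2*j+1)) = ρ^(4*j+4) * (1-ρ) := by
  rw [show eb (2*j+1) = true :: false :: List.replicate (4*j+3) true by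
    simp only [eb, cb_odd]; congr 2; ring]
  rw [wt_cons, wt_cons, wt_rep]
  simp only [Bool.cond_true, Bool.cond_false]
  rw [show 4*j+4 = (4*j+3)+1 from rfl, pow_succ]
  ring

lemma wt_eb_even (ρ : ℝ) (j : ℕ) : wt ρ (eb (2*j+2)) = ρ^(4*j+5) * (1-ρ)^2 := by
  rw [show eb (2*j+2) = false :: false :: List.replicate (4*j+5) true by
    simp only [eb, show 2*j+2 = 2*(j+1) by ring, cb_even]; congr 2; ring]
  rw [wt_cons, wt_cons, wt_rep]
  simp only [Bool.cond_false]
  ring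

lemma sum_T_zero (ρ : ℝ) : ∑ a ∈ T 0, wt ρ a = ρ * (1-ρ)^2 := by
  rw [show T 0 = {[false, false, true]} from rfl, Finset.sum_singleton]
  rw [wt_cons, wt_cons]
  simp only [Bool.cond_false]
  simp [wt]
  ring

lemma key (ρ : ℝ) (h0 : 0 ≤ ρ) : ∀ j : ℕ,
    (∑ a ∈ T (2*j+1), wt ρ a) =
      ρ * (-(ρ ^ (4*j+4)) + ρ ^ (4*j+5) - ρ ^ (4*(j+1)+3) + ρ^3 - ρ + 1)
        / (ρ^3 + ρ^2 + ρ + 1) ∧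
    (∑ a ∈ T (2*j+2), wt ρ a) =
      ρ * (-(ρ ^ (4*(j+1)+4)) + ρ ^ (4*(j+1)+5) - ρ ^ (4*(j+1)+3) + ρ^3 - ρ + 1)
        / (ρ^3 + ρ^2 + ρ + 1) := by
  have hD : (ρ^3 + ρ^2 + ρ + 1) ≠ 0 := by positivity
  intro j
  induction j with
  | zero =>
    have h1 : ∑ a ∈ T (2*0+1), wt ρ a = ρ*(1-ρ)^2 + ρ^(4*0+4)*(1-ρ) := by
      rw [show 2*0+1 = 0+1 from rfl, sum_T_succ, sum_T_zero,
          show (0:ℕ)+1 = 2*0+1 from rfl, wt_eb_odd]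
    constructor
    · rw [h1]; field_simp; ring
    · have h2 : ∑ a ∈ T (2*0+2), wt ρ a
          = (∑ a ∈ T (2*0+1), wt ρ a) + ρ^(4*0+5)*(1-ρ)^2 := by
        rw [show 2*0+2 = (2*0+1)+1 from rfl, sum_T_succ,
            show 2*0+1+1 = 2*0+2 from rfl, wt_eb_even]
      rw [h2, h1]; field_simp; ring
  | succ j ih =>
    obtain ⟨iho, ihe⟩ := ih
    have hodd : ∑ a ∈ T (2*(j+1)+1), wt ρ a
        = (∑ a ∈ T (2*j+2), wt ρ a) + ρ^(4*(j+1)+4)*(1-ρ) := by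
      rw [show 2*(j+1)+1 = (2*j+2)+1 by ring, sum_T_succ,
          show (2*j+2)+1 = 2*(j+1)+1 by ring, wt_eb_odd]
    constructor
    · rw [hodd, ihe]; field_simp; ring
    · have heven : ∑ a ∈ T (2*(j+1)+2), wt ρ a
          = (∑ a ∈ T (2*(j+1)+1), wt ρ a) + ρ^(4*(j+1)+5)*(1-ρ)^2 := by
        rw [show 2*(j+1)+2 = (2*(j+1)+1)+1 by ring, sum_T_succ,
            show (2*(j+1)+1)+1 = 2*(j+1)+2 by ring, wt_eb_even]
      rw [heven, hodd, ihe]; field_simp; ring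


theorem stmt9 (n : ℕ) (hn : 1 ≤ n) (ρ : ℝ) (h0 : 0 ≤ ρ) (h1 : ρ ≤ 1) :
    (∑ᶠ a ∈ preim n [false, false, true], wt ρ a) =
      ρ * (-(ρ ^ (4 * ⌈((n:ℝ) - 1)/2⌉₊ + 4)) + ρ ^ (4 * ⌈((n:ℝ) - 1)/2⌉₊ + 5)
            - ρ ^ (4 * ⌊((n:ℝ) + 1)/2⌋₊ + 3) + ρ^3 - ρ + 1)
        / (ρ^3 + ρ^2 + ρ + 1) := by
  have hk := key ρ h0
  rw [char, finsum_mem_coe_finset]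
  rcases Nat.even_or_odd n with he | ho
  · obtain ⟨j, hj⟩ : ∃ j, n = 2*j+2 := by
      obtain ⟨j, hj⟩ := he; exact ⟨j-1, by omega⟩
    subst hj
    have hceil : ⌈(((2*j+2:ℕ):ℝ) - 1)/2⌉₊ = j+1 := by
      rw [show (((2*j+2:ℕ):ℝ) - 1)/2 = (j:ℝ) + 1/2 by push_cast; ring]
      rw [Nat.ceil_eq_iff (by omega)]
      constructor
      · push_cast; linarith [Nat.cast_nonneg (α := ℝ) j]
      · push_cast; linarith [Nat.cast_nonneg (α := ℝ) j]
    have hfloor : ⌊(((2*j+2:ℕ):ℝ) + 1)/2⌋₊ = j+1 := by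
      rw [show (((2*j+2:ℕ):ℝ) + 1)/2 = (j:ℝ) + 3/2 by push_cast; ring]
      rw [Nat.floor_eq_iff (by positivity)]
      constructor
      · push_cast; linarith [Nat.cast_nonneg (α := ℝ) j]
      · push_cast; linarith [Nat.cast_nonneg (α := ℝ) j]
    rw [hceil, hfloor]
    exact (hk j).2
  · obtain ⟨j, hj⟩ := ho
    subst hj
    have hceil : ⌈(((2*j+1:ℕ):ℝ) - 1)/2⌉₊ = j := by
      rw [show (((2*j+1:ℕ):ℝ) - 1)/2 = ((j:ℕ):ℝ) by push_cast; ring]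
      exact Nat.ceil_natCast j
    have hfloor : ⌊(((2*j+1:ℕ):ℝ) + 1)/2⌋₊ = j+1 := by
      rw [show (((2*j+1:ℕ):ℝ) + 1)/2 = (((j+1:ℕ)):ℝ) by push_cast; ring]
      exact Nat.floor_natCast (j+1)
    rw [hceil, hfloor]
    exact (hk j).1
end
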